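/- Let $u = (u_1, u_2) : \mathbb{H}^1 \to \mathbb{R}^2$ be a smooth mapping satisfying $X u_1 = 0$, $Y u_2 = 0$, and $Y u_1 + X u_2 = 0$, where $X = \partial_x + 2y\,\partial_t$ and $Y = \partial_y - 2x\,\partial_t$. Then there exist constants $c_1, c_2, \alpha, \mu, \nu \in \mathbb{R}$ such that $u_1 = c_1 + \alpha y - \frac{\mu}{4} t + \frac{\mu x y + \nu y^2}{2}$ and $u_2 = c_2 - \alpha x - \frac{\nu}{4} t - \frac{\nu x y + \mu x^2}{2}$. In particular, the solution space is $5$-dimensional. -/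

import Mathlib

/-- The left-invariant vector field `X = ∂ₓ + 2y ∂ₜ` on `ℍ¹ ≅ ℝ³`,
with coordinates `p = (x, y, t)`. -/
noncomputable def Xd (f : ℝ × ℝ × ℝ → ℝ) (p : ℝ × ℝ × ℝ) : ℝ :=
  fderiv ℝ f p (1, 0, 2 * p.2.1)

/-- The left-invariant vector field `Y = ∂_y - 2x ∂ₜ` on `ℍ¹ ≅ ℝ³`. -/
noncomputable def Yd (f : ℝ × ℝ × ℝ → ℝ) (p : ℝ × ℝ × ℝ) : ℝ :=
  fderiv ℝ f p (0, 1, -(2 * p.1))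

open ContinuousLinearMap

noncomputable def pd (v : ℝ×ℝ×ℝ) (f : ℝ×ℝ×ℝ → ℝ) (p : ℝ×ℝ×ℝ) : ℝ := fderiv ℝ f p v

lemma contDiff_pd (v : ℝ×ℝ×ℝ) {f : ℝ×ℝ×ℝ → ℝ} (hf : ContDiff ℝ (⊤ : ℕ∞) f) :
    ContDiff ℝ (⊤ : ℕ∞) (pd v f) :=
  (hf.fderiv_right (by simp)).clm_apply contDiff_const

noncomputable def dxL : ℝ×ℝ×ℝ →L[ℝ] ℝ := fst ℝ ℝ (ℝ×ℝ)
noncomputable def dyL : ℝ×ℝ×ℝ →L[ℝ] ℝ := (fst ℝ ℝ ℝ).comp (snd ℝ ℝ (ℝ×ℝ))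
noncomputable def dtL : ℝ×ℝ×ℝ →L[ℝ] ℝ := (snd ℝ ℝ ℝ).comp (snd ℝ ℝ (ℝ×ℝ))

lemma Hx (p : ℝ×ℝ×ℝ) : HasFDerivAt (fun q : ℝ×ℝ×ℝ => q.1) dxL p := hasFDerivAt_fst
lemma Hy (p : ℝ×ℝ×ℝ) : HasFDerivAt (fun q : ℝ×ℝ×ℝ => q.2.1) dyL p :=
  hasFDerivAt_fst.comp p hasFDerivAt_snd
lemma Ht (p : ℝ×ℝ×ℝ) : HasFDerivAt (fun q : ℝ×ℝ×ℝ => q.2.2) dtL p :=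
  hasFDerivAt_snd.comp p hasFDerivAt_snd

@[simp] lemma dxL_apply (v : ℝ×ℝ×ℝ) : dxL v = v.1 := rfl
@[simp] lemma dyL_apply (v : ℝ×ℝ×ℝ) : dyL v = v.2.1 := rfl
@[simp] lemma dtL_apply (v : ℝ×ℝ×ℝ) : dtL v = v.2.2 := rfl

lemma clm_apply_eq (L : ℝ×ℝ×ℝ →L[ℝ] ℝ) (v : ℝ×ℝ×ℝ) :
    L v = v.1 * L (1,0,0) + v.2.1 * L (0,1,0) + v.2.2 * L (0,0,1) := by
  obtain ⟨a, b, c⟩ := v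
  have h : (a,b,c) = a • ((1:ℝ),(0:ℝ),(0:ℝ)) + b • ((0:ℝ),(1:ℝ),(0:ℝ)) + c • ((0:ℝ),(0:ℝ),(1:ℝ)) := by
    simp [Prod.ext_iff]
  rw [h, map_add, map_add, map_smul, map_smul, map_smul]
  simp

lemma pd_comm {f : ℝ×ℝ×ℝ → ℝ} (hf : ContDiff ℝ (⊤ : ℕ∞) f) (v w p : ℝ×ℝ×ℝ) :
    pd w (pd v f) p = pd v (pd w f) p := by
  have hd : ∀ y, HasFDerivAt f (fderiv ℝ f y) y := fun y =>
    ((hf.differentiable (by simp)) y).hasFDerivAt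
  have hd2 : HasFDerivAt (fderiv ℝ f) (fderiv ℝ (fderiv ℝ f) p) p :=
    (((hf.fderiv_right (m := (⊤ : ℕ∞)) (by simp)).differentiable (by simp)) p).hasFDerivAt
  have key : ∀ z : ℝ×ℝ×ℝ, pd z f = fun q => (fderiv ℝ f q) z := fun _ => rfl
  have key2 : ∀ u z : ℝ×ℝ×ℝ, pd u (pd z f) p = fderiv ℝ (fderiv ℝ f) p u z := by
    intro u z
    have h1 : HasFDerivAt (fun q => (fderiv ℝ f q) z)
        ((fderiv ℝ (fderiv ℝ f) p).flip z) p := by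
      have := hd2.clm_apply (hasFDerivAt_const z p)
      simpa using this
    rw [key]
    show fderiv ℝ (fun q => (fderiv ℝ f q) z) p u = _
    rw [h1.fderiv]
    rfl
  rw [key2, key2]
  exact second_derivative_symmetric hd hd2 w v

lemma Xd_eq {f : ℝ×ℝ×ℝ → ℝ} (hf : ContDiff ℝ (⊤ : ℕ∞) f) (p : ℝ×ℝ×ℝ) :
    Xd f p = pd (1,0,0) f p + 2 * (p.2.1 * pd (0,0,1) f p) := by
  have _ := hf
  have h : ((1:ℝ), (0:ℝ), 2 * p.2.1) =
      ((1:ℝ),(0:ℝ),(0:ℝ)) + (2 * p.2.1) • ((0:ℝ),(0:ℝ),(1:ℝ)) := by simp [Prod.ext_iff]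
  unfold Xd pd
  rw [h, map_add, map_smul]
  simp; ring

lemma Yd_eq {f : ℝ×ℝ×ℝ → ℝ} (hf : ContDiff ℝ (⊤ : ℕ∞) f) (p : ℝ×ℝ×ℝ) :
    Yd f p = pd (0,1,0) f p - 2 * (p.1 * pd (0,0,1) f p) := by
  have _ := hf
  have h : ((0:ℝ), (1:ℝ), -(2 * p.1)) =
      ((0:ℝ),(1:ℝ),(0:ℝ)) + (-(2 * p.1)) • ((0:ℝ),(0:ℝ),(1:ℝ)) := by simp [Prod.ext_iff]
  unfold Yd pd
  rw [h, map_add, map_smul]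
  simp; ring

@[simp] lemma pd_zero_fun (v p : ℝ×ℝ×ℝ) : pd v (fun _ => (0:ℝ)) p = 0 := by
  simp [pd]

/-- Master lemma: directional derivative of an identically-zero expression of the
standard shape occurring in our PDE system. -/
lemma pdM {g1 h1 g2 h2 k : ℝ×ℝ×ℝ → ℝ} (c : ℝ)
    (hg1 : ContDiff ℝ (⊤ : ℕ∞) g1) (hh1 : ContDiff ℝ (⊤ : ℕ∞) h1) (hg2 : ContDiff ℝ (⊤ : ℕ∞) g2)
    (hh2 : ContDiff ℝ (⊤ : ℕ∞) h2) (hk : ContDiff ℝ (⊤ : ℕ∞) k)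
    (H : ∀ q, g1 q + 2 * (q.2.1 * h1 q) + g2 q - 2 * (q.1 * h2 q) + c * k q = 0)
    (v1 v2 v3 : ℝ) (p : ℝ×ℝ×ℝ) :
    pd (v1,v2,v3) g1 p + 2 * (v2 * h1 p + p.2.1 * pd (v1,v2,v3) h1 p)
      + pd (v1,v2,v3) g2 p - 2 * (v1 * h2 p + p.1 * pd (v1,v2,v3) h2 p)
      + c * pd (v1,v2,v3) k p = 0 := by
  have dg1 := ((hg1.differentiable (by simp)) p).hasFDerivAt
  have dh1 := ((hh1.differentiable (by simp)) p).hasFDerivAt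
  have dg2 := ((hg2.differentiable (by simp)) p).hasFDerivAt
  have dh2 := ((hh2.differentiable (by simp)) p).hasFDerivAt
  have dk := ((hk.differentiable (by simp)) p).hasFDerivAt
  have HF : HasFDerivAt
      (fun q => g1 q + 2 * (q.2.1 * h1 q) + g2 q - 2 * (q.1 * h2 q) + c * k q)
      (fderiv ℝ g1 p + (2:ℝ) • (p.2.1 • fderiv ℝ h1 p + h1 p • dyL) + fderiv ℝ g2 p
        - (2:ℝ) • (p.1 • fderiv ℝ h2 p + h2 p • dxL) + c • fderiv ℝ k p) p :=
    ((((dg1.add (((Hy p).mul dh1).const_mul 2)).add dg2).sub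
      (((Hx p).mul dh2).const_mul 2)).add (dk.const_mul c))
  have H0 : (fun q => g1 q + 2 * (q.2.1 * h1 q) + g2 q - 2 * (q.1 * h2 q) + c * k q)
      = (fun _ => (0:ℝ)) := funext H
  rw [H0] at HF
  have hL : (fderiv ℝ g1 p + (2:ℝ) • (p.2.1 • fderiv ℝ h1 p + h1 p • dyL) + fderiv ℝ g2 p
        - (2:ℝ) • (p.1 • fderiv ℝ h2 p + h2 p • dxL) + c • fderiv ℝ k p) = 0 :=
    HF.unique (hasFDerivAt_const 0 p)
  have hv := congrArg (fun (L : ℝ×ℝ×ℝ →L[ℝ] ℝ) => L (v1,v2,v3)) hL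
  simp only [ContinuousLinearMap.add_apply, ContinuousLinearMap.sub_apply,
    ContinuousLinearMap.smul_apply, smul_eq_mul, dxL_apply, dyL_apply,
    ContinuousLinearMap.zero_apply] at hv
  unfold pd
  linarith [hv]

/-- pd of `g - 2*(x*h)`. -/
lemma pd_w_shape {g h : ℝ×ℝ×ℝ → ℝ} (hg : ContDiff ℝ (⊤ : ℕ∞) g) (hh : ContDiff ℝ (⊤ : ℕ∞) h)
    (v1 v2 v3 : ℝ) (p : ℝ×ℝ×ℝ) :
    pd (v1,v2,v3) (fun q => g q - 2 * (q.1 * h q)) p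
      = pd (v1,v2,v3) g p - 2 * (v1 * h p + p.1 * pd (v1,v2,v3) h p) := by
  have dg := ((hg.differentiable (by simp)) p).hasFDerivAt
  have dh := ((hh.differentiable (by simp)) p).hasFDerivAt
  have HF : HasFDerivAt (fun q => g q - 2 * (q.1 * h q))
      (fderiv ℝ g p - (2:ℝ) • (p.1 • fderiv ℝ h p + h p • dxL)) p :=
    dg.sub (((Hx p).mul dh).const_mul 2)
  show fderiv ℝ _ p _ = _
  rw [HF.fderiv]
  simp only [ContinuousLinearMap.sub_apply, ContinuousLinearMap.add_apply,
    ContinuousLinearMap.smul_apply, smul_eq_mul, dxL_apply]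
  unfold pd
  ring

lemma pd_sub {f g : ℝ×ℝ×ℝ → ℝ} {p : ℝ×ℝ×ℝ} (hf : DifferentiableAt ℝ f p)
    (hg : DifferentiableAt ℝ g p) (v : ℝ×ℝ×ℝ) :
    pd v (fun q => f q - g q) p = pd v f p - pd v g p := by
  unfold pd
  rw [fderiv_fun_sub hf hg]
  rfl

/-- zero gradient implies constant -/
lemma Zconst {f : ℝ×ℝ×ℝ → ℝ} (hf : ContDiff ℝ (⊤ : ℕ∞) f)
    (h1 : ∀ p, pd (1,0,0) f p = 0) (h2 : ∀ p, pd (0,1,0) f p = 0)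
    (h3 : ∀ p, pd (0,0,1) f p = 0) : ∀ p, f p = f 0 := by
  intro p
  apply is_const_of_fderiv_eq_zero (hf.differentiable (by simp)) _ p 0
  intro q
  refine ContinuousLinearMap.ext fun v => ?_
  rw [ContinuousLinearMap.zero_apply, clm_apply_eq]
  have e1 := h1 q; have e2 := h2 q; have e3 := h3 q
  unfold pd at e1 e2 e3
  rw [e1, e2, e3]; ring

/-- a function annihilated by both `X` and `Y` is constant -/
lemma Kconst {f : ℝ×ℝ×ℝ → ℝ} (hf : ContDiff ℝ (⊤ : ℕ∞) f)
    (F1 : ∀ p, pd (1,0,0) f p + 2 * (p.2.1 * pd (0,0,1) f p) = 0)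
    (F2 : ∀ p, pd (0,1,0) f p - 2 * (p.1 * pd (0,0,1) f p) = 0) :
    ∀ p, f p = f 0 := by
  have hf1 := contDiff_pd (1,0,0) hf
  have hf2 := contDiff_pd (0,1,0) hf
  have hf3 := contDiff_pd (0,0,1) hf
  have M1 := fun (v1 v2 v3 : ℝ) (p : ℝ×ℝ×ℝ) =>
    pdM (g1 := pd (1,0,0) f) (h1 := pd (0,0,1) f) (g2 := fun _ => 0) (h2 := fun _ => 0)
      (k := fun _ => 0) 0 hf1 hf3 contDiff_const contDiff_const contDiff_const
      (fun q => by simpa using F1 q) v1 v2 v3 p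
  have M2 := fun (v1 v2 v3 : ℝ) (p : ℝ×ℝ×ℝ) =>
    pdM (g1 := fun _ => 0) (h1 := fun _ => 0) (g2 := pd (0,1,0) f) (h2 := pd (0,0,1) f)
      (k := fun _ => 0) 0 contDiff_const contDiff_const hf2 hf3 contDiff_const
      (fun q => by simpa using F2 q) v1 v2 v3 p
  simp only [pd_zero_fun, mul_zero, zero_mul, add_zero, sub_zero, zero_add, one_mul] at M1 M2
  have h3 : ∀ p, pd (0,0,1) f p = 0 := by
    intro p
    have A2 := M1 0 1 0 p
    have A3 := M1 0 0 1 p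
    have B1 := M2 1 0 0 p
    have B3 := M2 0 0 1 p
    have C12 := pd_comm hf (1,0,0) (0,1,0) p
    have C13 := pd_comm hf (1,0,0) (0,0,1) p
    have C23 := pd_comm hf (0,1,0) (0,0,1) p
    linear_combination (A2 - B1 - C12 + 2*p.2.1*C23 - 2*p.2.1*B3 + 2*p.1*C13 - 2*p.1*A3)/4
  have h1 : ∀ p, pd (1,0,0) f p = 0 := fun p => by
    linear_combination F1 p - 2*p.2.1 * h3 p
  have h2 : ∀ p, pd (0,1,0) f p = 0 := fun p => by
    linear_combination F2 p + 2*p.1 * h3 p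
  exact Zconst hf h1 h2 h3

/-- representation of a function with explicit polynomial gradient -/
lemma rep {f : ℝ×ℝ×ℝ → ℝ} (hf : ContDiff ℝ (⊤ : ℕ∞) f) (c1 c2 c3 cxy cxx cyy : ℝ)
    (H1 : ∀ p, pd (1,0,0) f p = c1 + cxy*p.2.1 + 2*cxx*p.1)
    (H2 : ∀ p, pd (0,1,0) f p = c2 + cxy*p.1 + 2*cyy*p.2.1)
    (H3 : ∀ p, pd (0,0,1) f p = c3) :
    ∀ p, f p = f 0 + c1*p.1 + c2*p.2.1 + c3*p.2.2 + cxy*(p.1*p.2.1)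
      + cxx*(p.1*p.1) + cyy*(p.2.1*p.2.1) := by
  have cx : ContDiff ℝ (⊤ : ℕ∞) (fun q : ℝ×ℝ×ℝ => q.1) := contDiff_fst
  have cy : ContDiff ℝ (⊤ : ℕ∞) (fun q : ℝ×ℝ×ℝ => q.2.1) := contDiff_fst.comp contDiff_snd
  have ct : ContDiff ℝ (⊤ : ℕ∞) (fun q : ℝ×ℝ×ℝ => q.2.2) := contDiff_snd.comp contDiff_snd
  set Pq : ℝ×ℝ×ℝ → ℝ := fun q => c1*q.1 + c2*q.2.1 + c3*q.2.2 + cxy*(q.1*q.2.1)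
      + cxx*(q.1*q.1) + cyy*(q.2.1*q.2.1) with hPq
  have hP : ContDiff ℝ (⊤ : ℕ∞) Pq := by
    rw [hPq]
    exact (((((contDiff_const.mul cx).add (contDiff_const.mul cy)).add
      (contDiff_const.mul ct)).add (contDiff_const.mul (cx.mul cy))).add
      (contDiff_const.mul (cx.mul cx))).add (contDiff_const.mul (cy.mul cy))
  have hPd : ∀ (v1 v2 v3 : ℝ) (p : ℝ×ℝ×ℝ), pd (v1,v2,v3) Pq p
      = c1*v1 + c2*v2 + c3*v3 + cxy*(v1*p.2.1 + p.1*v2) + cxx*(2*(v1*p.1))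
        + cyy*(2*(v2*p.2.1)) := by
    intro v1 v2 v3 p
    have HF : HasFDerivAt Pq
        (c1 • dxL + c2 • dyL + c3 • dtL + cxy • (p.1 • dyL + p.2.1 • dxL)
          + cxx • (p.1 • dxL + p.1 • dxL) + cyy • (p.2.1 • dyL + p.2.1 • dyL)) p := by
      rw [hPq]
      exact ((((((Hx p).const_mul c1).add ((Hy p).const_mul c2)).add
        ((Ht p).const_mul c3)).add (((Hx p).mul (Hy p)).const_mul cxy)).add
        (((Hx p).mul (Hx p)).const_mul cxx)).add (((Hy p).mul (Hy p)).const_mul cyy)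
    show fderiv ℝ Pq p _ = _
    rw [HF.fderiv]
    simp only [ContinuousLinearMap.add_apply, ContinuousLinearMap.smul_apply,
      smul_eq_mul, dxL_apply, dyL_apply, dtL_apply]
    ring
  have hg : ContDiff ℝ (⊤ : ℕ∞) (fun q => f q - Pq q) := hf.sub hP
  have hdf : Differentiable ℝ f := hf.differentiable (by simp)
  have hdP : Differentiable ℝ Pq := hP.differentiable (by simp)
  have hz := Zconst hg
    (fun p => by rw [pd_sub (hdf p) (hdP p), H1 p, hPd 1 0 0 p]; ring)
    (fun p => by rw [pd_sub (hdf p) (hdP p), H2 p, hPd 0 1 0 p]; ring)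
    (fun p => by rw [pd_sub (hdf p) (hdP p), H3 p, hPd 0 0 1 p]; ring)
  intro p
  have h0 := hz p
  have hP0 : Pq 0 = 0 := by rw [hPq]; norm_num
  rw [hP0] at h0
  have h0' : f p - (c1*p.1 + c2*p.2.1 + c3*p.2.2 + cxy*(p.1*p.2.1) + cxx*(p.1*p.1)
      + cyy*(p.2.1*p.2.1)) = f 0 - 0 := h0
  linarith [h0']

/-- Kernel of the operator `Q` on `ℍ¹`: solutions of `Xu₁ = 0`, `Yu₂ = 0`,
`Yu₁ + Xu₂ = 0` form a 5-dimensional space with the explicit description below. -/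
theorem kernel_Q_on_H1 (u₁ u₂ : ℝ × ℝ × ℝ → ℝ)
    (h₁ : ContDiff ℝ (⊤ : ℕ∞) u₁) (h₂ : ContDiff ℝ (⊤ : ℕ∞) u₂)
    (hX : ∀ p, Xd u₁ p = 0) (hY : ∀ p, Yd u₂ p = 0)
    (hXY : ∀ p, Yd u₁ p + Xd u₂ p = 0) :
    ∃ c₁ c₂ α μ ν : ℝ, ∀ p : ℝ × ℝ × ℝ,
      u₁ p = c₁ + α * p.2.1 - μ / 4 * p.2.2 + (μ * p.1 * p.2.1 + ν * p.2.1 ^ 2) / 2 ∧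
      u₂ p = c₂ - α * p.1 - ν / 4 * p.2.2 - (ν * p.1 * p.2.1 + μ * p.1 ^ 2) / 2 := by
  -- smoothness of the partial derivatives
  have hu1_1 := contDiff_pd (1,0,0) h₁
  have hu1_2 := contDiff_pd (0,1,0) h₁
  have hu1_3 := contDiff_pd (0,0,1) h₁
  have hu2_1 := contDiff_pd (1,0,0) h₂
  have hu2_2 := contDiff_pd (0,1,0) h₂
  have hu2_3 := contDiff_pd (0,0,1) h₂
  -- the hypotheses in coordinates
  have E1 : ∀ q, pd (1,0,0) u₁ q + 2 * (q.2.1 * pd (0,0,1) u₁ q) = 0 := by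
    intro q
    have h := hX q
    rw [Xd_eq h₁ q] at h
    exact h
  have E2 : ∀ q, pd (0,1,0) u₂ q - 2 * (q.1 * pd (0,0,1) u₂ q) = 0 := by
    intro q
    have h := hY q
    rw [Yd_eq h₂ q] at h
    exact h
  have E3 : ∀ q, pd (0,1,0) u₁ q - 2 * (q.1 * pd (0,0,1) u₁ q)
      + (pd (1,0,0) u₂ q + 2 * (q.2.1 * pd (0,0,1) u₂ q)) = 0 := by
    intro q
    have h := hXY q
    rw [Yd_eq h₁ q, Xd_eq h₂ q] at h
    linarith
  -- differentiated versions
  have mE1 := fun (v1 v2 v3 : ℝ) (p : ℝ×ℝ×ℝ) =>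
    pdM (g1 := pd (1,0,0) u₁) (h1 := pd (0,0,1) u₁) (g2 := fun _ => 0) (h2 := fun _ => 0)
      (k := fun _ => 0) 0 hu1_1 hu1_3 contDiff_const contDiff_const contDiff_const
      (fun q => by simpa using E1 q) v1 v2 v3 p
  have mE2 := fun (v1 v2 v3 : ℝ) (p : ℝ×ℝ×ℝ) =>
    pdM (g1 := fun _ => 0) (h1 := fun _ => 0) (g2 := pd (0,1,0) u₂) (h2 := pd (0,0,1) u₂)
      (k := fun _ => 0) 0 contDiff_const contDiff_const hu2_2 hu2_3 contDiff_const
      (fun q => by simpa using E2 q) v1 v2 v3 p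
  have mE3 := fun (v1 v2 v3 : ℝ) (p : ℝ×ℝ×ℝ) =>
    pdM (g1 := pd (1,0,0) u₂) (h1 := pd (0,0,1) u₂) (g2 := pd (0,1,0) u₁)
      (h2 := pd (0,0,1) u₁) (k := fun _ => 0) 0 hu2_1 hu2_3 hu1_2 hu1_3 contDiff_const
      (fun q => by have h := E3 q; simp only [zero_mul, mul_zero, add_zero]; linarith) v1 v2 v3 p
  simp only [pd_zero_fun, mul_zero, zero_mul, add_zero, sub_zero, zero_add, one_mul]
    at mE1 mE2 mE3
  -- second-order consequences (D1, D2, D3)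
  have D1 : ∀ p : ℝ×ℝ×ℝ, pd (1,0,0) (pd (0,0,1) u₁) p
      + 2 * (p.2.1 * pd (0,0,1) (pd (0,0,1) u₁) p) = 0 := by
    intro p
    have h := mE1 0 0 1 p
    have c := pd_comm h₁ (1,0,0) (0,0,1) p
    linear_combination h - c
  have D2 : ∀ p : ℝ×ℝ×ℝ, pd (0,1,0) (pd (0,0,1) u₂) p
      - 2 * (p.1 * pd (0,0,1) (pd (0,0,1) u₂) p) = 0 := by
    intro p
    have h := mE2 0 0 1 p
    have c := pd_comm h₂ (0,1,0) (0,0,1) p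
    linear_combination h - c
  have D3 : ∀ p : ℝ×ℝ×ℝ, pd (0,1,0) (pd (0,0,1) u₁) p
      - 2 * (p.1 * pd (0,0,1) (pd (0,0,1) u₁) p)
      + pd (1,0,0) (pd (0,0,1) u₂) p + 2 * (p.2.1 * pd (0,0,1) (pd (0,0,1) u₂) p) = 0 := by
    intro p
    have h := mE3 0 0 1 p
    have c1 := pd_comm h₂ (1,0,0) (0,0,1) p
    have c2 := pd_comm h₁ (0,1,0) (0,0,1) p
    linear_combination h - c1 - c2
  -- the function w = Y u₁
  set w : ℝ×ℝ×ℝ → ℝ := fun q => pd (0,1,0) u₁ q - 2 * (q.1 * pd (0,0,1) u₁ q) with hw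
  have hwsm : ContDiff ℝ (⊤ : ℕ∞) w := by
    rw [hw]
    exact hu1_2.sub (contDiff_const.mul (contDiff_fst.mul hu1_3))
  have hpdw : ∀ (v1 v2 v3 : ℝ) (p : ℝ×ℝ×ℝ), pd (v1,v2,v3) w p
      = pd (v1,v2,v3) (pd (0,1,0) u₁) p
        - 2 * (v1 * pd (0,0,1) u₁ p + p.1 * pd (v1,v2,v3) (pd (0,0,1) u₁) p) := by
    intro v1 v2 v3 p
    rw [hw]
    exact pd_w_shape hu1_2 hu1_3 v1 v2 v3 p
  -- W3 : ∂ₜ w = Y a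
  have W3 : ∀ p : ℝ×ℝ×ℝ, pd (0,0,1) w p
      = pd (0,1,0) (pd (0,0,1) u₁) p - 2 * (p.1 * pd (0,0,1) (pd (0,0,1) u₁) p) := by
    intro p
    have h := hpdw 0 0 1 p
    have c := pd_comm h₁ (0,1,0) (0,0,1) p
    linear_combination h + c
  -- W1 : X w = -4 a
  have W1 : ∀ p : ℝ×ℝ×ℝ, pd (1,0,0) w p + 2 * (p.2.1 * pd (0,0,1) w p)
      + 4 * pd (0,0,1) u₁ p = 0 := by
    intro p
    have h1 := hpdw 1 0 0 p
    have h2 := mE1 0 1 0 p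
    have h3 := pd_comm h₁ (0,1,0) (1,0,0) p
    have h4 := W3 p
    have h5 := D1 p
    linear_combination h1 + h2 + h3 + 2*p.2.1*h4 - 2*p.1*h5
  -- W2 : Y w = -4 b
  have W2 : ∀ p : ℝ×ℝ×ℝ, pd (0,1,0) w p - 2 * (p.1 * pd (0,0,1) w p)
      + 4 * pd (0,0,1) u₂ p = 0 := by
    intro p
    have g1 := hpdw 0 1 0 p
    have g2 := mE3 0 1 0 p
    have g3 := pd_comm h₂ (1,0,0) (0,1,0) p
    have g4 := mE2 1 0 0 p
    have h4 := W3 p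
    have g6 := D3 p
    have g7 := D2 p
    linear_combination g1 + g2 - g3 - g4 - 2*p.1*h4 - 2*p.1*g6 - 2*p.2.1*g7
  -- differentiate W1 and W2 once more
  have mW1 := fun (v1 v2 v3 : ℝ) (p : ℝ×ℝ×ℝ) =>
    pdM (g1 := pd (1,0,0) w) (h1 := pd (0,0,1) w) (g2 := fun _ => 0) (h2 := fun _ => 0)
      (k := pd (0,0,1) u₁) 4 (contDiff_pd _ hwsm) (contDiff_pd _ hwsm)
      contDiff_const contDiff_const hu1_3
      (fun q => by have h := W1 q; simp only [zero_mul, mul_zero, add_zero]; linarith) v1 v2 v3 p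
  have mW2 := fun (v1 v2 v3 : ℝ) (p : ℝ×ℝ×ℝ) =>
    pdM (g1 := fun _ => 0) (h1 := fun _ => 0) (g2 := pd (0,1,0) w) (h2 := pd (0,0,1) w)
      (k := pd (0,0,1) u₂) 4 contDiff_const contDiff_const
      (contDiff_pd _ hwsm) (contDiff_pd _ hwsm) hu2_3
      (fun q => by have h := W2 q; simp only [zero_mul, mul_zero, add_zero]; linarith) v1 v2 v3 p
  simp only [pd_zero_fun, mul_zero, zero_mul, add_zero, sub_zero, zero_add, one_mul]
    at mW1 mW2
  -- Y a = 0
  have Ya : ∀ p : ℝ×ℝ×ℝ, pd (0,1,0) (pd (0,0,1) u₁) p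
      - 2 * (p.1 * pd (0,0,1) (pd (0,0,1) u₁) p) = 0 := by
    intro p
    have S1 := mW1 0 1 0 p
    have S2 := mW1 0 0 1 p
    have S3 := mW2 1 0 0 p
    have S4 := mW2 0 0 1 p
    have Cw12 := pd_comm hwsm (1,0,0) (0,1,0) p
    have Cw13 := pd_comm hwsm (1,0,0) (0,0,1) p
    have Cw23 := pd_comm hwsm (0,1,0) (0,0,1) p
    have W3e := W3 p
    have g6 := D3 p
    linear_combination (1/12)*S1 - (p.1/6)*S2 - (1/12)*S3 - (p.2.1/6)*S4 - (1/12)*Cw12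
      + (p.1/6)*Cw13 + (p.2.1/6)*Cw23 - (1/3)*W3e + (1/3)*g6
  -- X b = 0
  have Xb : ∀ p : ℝ×ℝ×ℝ, pd (1,0,0) (pd (0,0,1) u₂) p
      + 2 * (p.2.1 * pd (0,0,1) (pd (0,0,1) u₂) p) = 0 := by
    intro p
    linear_combination D3 p - Ya p
  -- hence a := ∂ₜ u₁ and b := ∂ₜ u₂ are constant
  have aconst := Kconst hu1_3 D1 Ya
  have bconst := Kconst hu2_3 Xb D2
  -- w has constant gradient
  have hd3w : ∀ p : ℝ×ℝ×ℝ, pd (0,0,1) w p = 0 := by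
    intro p
    have h := W3 p
    have h2 := Ya p
    linear_combination h + h2
  have hd1w : ∀ p : ℝ×ℝ×ℝ, pd (1,0,0) w p = -4 * pd (0,0,1) u₁ 0 := by
    intro p
    have h := W1 p
    have h2 := hd3w p
    have h3 := aconst p
    linear_combination h - 2*p.2.1*h2 - 4*h3
  have hd2w : ∀ p : ℝ×ℝ×ℝ, pd (0,1,0) w p = -4 * pd (0,0,1) u₂ 0 := by
    intro p
    have h := W2 p
    have h2 := hd3w p
    have h3 := bconst p
    linear_combination h + 2*p.1*h2 - 4*h3
  -- notation for the constants
  set A := pd (0,0,1) u₁ 0 with hA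
  set B := pd (0,0,1) u₂ 0 with hB
  -- w is affine
  have wrep := rep hwsm (-4*A) (-4*B) 0 0 0 0
    (fun p => by rw [hd1w p]; ring)
    (fun p => by rw [hd2w p]; ring)
    (fun p => by rw [hd3w p])
  -- gradient of u₁
  have gu1_3 : ∀ p : ℝ×ℝ×ℝ, pd (0,0,1) u₁ p = A := fun p => aconst p
  have gu1_1 : ∀ p : ℝ×ℝ×ℝ, pd (1,0,0) u₁ p = -2*A*p.2.1 := by
    intro p
    have h := E1 p
    have h2 := gu1_3 p
    linear_combination h - 2*p.2.1*h2
  have hwp : ∀ p : ℝ×ℝ×ℝ, w p = pd (0,1,0) u₁ p - 2 * (p.1 * pd (0,0,1) u₁ p) :=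
    fun p => rfl
  have gu1_2 : ∀ p : ℝ×ℝ×ℝ, pd (0,1,0) u₁ p = w 0 - 2*A*p.1 - 4*B*p.2.1 := by
    intro p
    have h := wrep p
    have h1' := hwp p
    have h2 := gu1_3 p
    linear_combination h - h1' + 2*p.1*h2
  -- gradient of u₂
  have gu2_3 : ∀ p : ℝ×ℝ×ℝ, pd (0,0,1) u₂ p = B := fun p => bconst p
  have gu2_2 : ∀ p : ℝ×ℝ×ℝ, pd (0,1,0) u₂ p = 2*B*p.1 := by
    intro p
    have h := E2 p
    have h2 := gu2_3 p
    linear_combination h + 2*p.1*h2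
  have gu2_1 : ∀ p : ℝ×ℝ×ℝ, pd (1,0,0) u₂ p = -(w 0) + 4*A*p.1 + 2*B*p.2.1 := by
    intro p
    have h := E3 p
    have h2 := gu1_2 p
    have h3 := gu1_3 p
    have h4 := gu2_3 p
    linear_combination h - h2 + 2*p.1*h3 - 2*p.2.1*h4
  -- representations
  have repu1 := rep h₁ 0 (w 0) A (-2*A) 0 (-2*B)
    (fun p => by rw [gu1_1 p]; ring)
    (fun p => by rw [gu1_2 p]; ring)
    (fun p => by rw [gu1_3 p])
  have repu2 := rep h₂ (-(w 0)) 0 B (2*B) (2*A) 0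
    (fun p => by rw [gu2_1 p]; ring)
    (fun p => by rw [gu2_2 p]; ring)
    (fun p => by rw [gu2_3 p])
  refine ⟨u₁ 0, u₂ 0, w 0, -4*A, -4*B, fun p => ⟨?_, ?_⟩⟩
  · have h := repu1 p
    rw [h]; ring
  · have h := repu2 p
    rw [h]; ring
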